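/- Skolemization under conditioning (C-SKOLEM): for a finitely supported distribution μ on A and a predicate family Φ : B → A → M → Prop, (𝒞_μ v. ∃b, Φ(b, v)) is equivalent to ∃f : A → B, (𝒞_μ v. Φ(f(v), v)). -/

import Mathlib

/-- The conditioning modality:
`(𝒞_μ v. Ψ(v))(x) := ∃ κ, wsum(μ, κ) ≼ x ∧ ∀ v ∈ supp(μ), Ψ(v)(κ(v))`. -/
def Cond {M A : Type*} (le : M → M → Prop) (wsum : PMF A → (A → M) → M)
    (μ : PMF A) (Φ : A → M → Prop) (x : M) : Prop :=
  ∃ κ : A → M, le (wsum μ κ) x ∧ ∀ v ∈ μ.support, Φ v (κ v)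

theorem Set.forall_mem_exists_iff_exists_forall_mem {A B : Type*} [Nonempty B] {s : Set A}
    {P : A → B → Prop} : (∀ v ∈ s, ∃ b, P v b) ↔ ∃ f : A → B, ∀ v ∈ s, P v (f v) := by
  refine ⟨fun h => ?_, fun ⟨f, hf⟩ v hv => ⟨f v, hf v hv⟩⟩
  have hguarded : ∀ v, ∃ b, v ∈ s → P v b := fun v => by
    by_cases hv : v ∈ s
    · obtain ⟨b, hb⟩ := h v hv
      exact ⟨b, fun _ => hb⟩
    · exact ⟨Classical.arbitrary B, fun hv' => absurd hv' hv⟩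
  choose f hf using hguarded
  exact ⟨f, hf⟩

theorem stmt_18_general {M A B : Type*} [Nonempty B]
    (le : M → M → Prop) (wsum : PMF A → (A → M) → M)
    (μ : PMF A)
    (Φ : B → A → M → Prop) (x : M) :
    Cond le wsum μ (fun v y => ∃ b : B, Φ b v y) x ↔
      ∃ f : A → B, Cond le wsum μ (fun v => Φ (f v) v) x := by
  have hskolem (κ : A → M) :
      (∀ v ∈ μ.support, ∃ b, Φ b v (κ v)) ↔ ∃ f : A → B, ∀ v ∈ μ.support, Φ (f v) v (κ v) :=
    Set.forall_mem_exists_iff_exists_forall_mem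
  simp only [Cond, hskolem, ← exists_and_left]
  exact exists_comm

/-- C-SKOLEM: skolemization under conditioning: for a finitely
supported distribution `μ` on `A`, a nonempty type `B` and a predicate family
`Φ : B → A → M → Prop`, `(𝒞_μ v. ∃ b, Φ(b, v))(x)` is equivalent to
`∃ f : A → B, (𝒞_μ v. Φ(f v, v))(x)`. -/
theorem stmt_18 {M A B : Type*} [Nonempty B]
    (le : M → M → Prop) (wsum : PMF A → (A → M) → M)
    (μ : PMF A) (hfin : μ.support.Finite)
    (Φ : B → A → M → Prop) (x : M) :
    Cond le wsum μ (fun v y => ∃ b : B, Φ b v y) x ↔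
      ∃ f : A → B, Cond le wsum μ (fun v => Φ (f v) v) x :=
  stmt_18_general le wsum μ Φ x
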